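/- Let H be a bounded self-adjoint operator on ℓ²(ℕ) of class C¹ with respect to the position operator X. Then for all t ∈ ℝ and all φ ∈ D(X), ‖e^{iHt}φ‖_X² − ‖φ‖_X² = 2 ∫₀^t Re⟨i(ad_X H) e^{iHs}φ, X e^{iHs}φ⟩ ds, where ‖ψ‖_X² = ‖ψ‖² + ‖Xψ‖². -/

import Mathlib

open scoped InnerProductSpace
open Complex

noncomputable section

/-- The `n`-th Fourier coefficient of a `2π`-periodic function `f : ℝ → ℂ`. -/
def fcoef (f : ℝ → ℂ) (n : ℤ) : ℂ :=
  (1 / (2 * Real.pi)) • ∫ θ in (0:ℝ)..(2 * Real.pi), Complex.exp (-Complex.I * n * θ) * f θ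

variable {E : Type*} [NormedAddCommGroup E] [InnerProductSpace ℂ E] [CompleteSpace E]

/-- `e` is the canonical orthonormal (Hilbert) basis of `ℓ²(ℕ)`, abstractly:
an orthonormal family with dense span. -/
def IsONBasis (e : ℕ → E) : Prop :=
  Orthonormal ℂ e ∧ (Submodule.span ℂ (Set.range e)).topologicalClosure = ⊤

/-- `T` is the Toeplitz operator with symbol `f`: `⟪e n, T (e k)⟫ = f̂(n−k)`. -/
def IsToeplitz (e : ℕ → E) (f : ℝ → ℂ) (T : E →L[ℂ] E) : Prop :=
  ∀ n k : ℕ, ⟪e n, T (e k)⟫_ℂ = fcoef f ((n : ℤ) - k)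

/-- `T` is the Hankel operator with symbol `f`: `⟪e n, T (e k)⟫ = f̂(n+k+1)`
(0-based indexing of the paper's `f̂_{n+k-1}`, `n, k ≥ 1`). -/
def IsHankel (e : ℕ → E) (f : ℝ → ℂ) (T : E →L[ℂ] E) : Prop :=
  ∀ n k : ℕ, ⟪e n, T (e k)⟫_ℂ = fcoef f ((n : ℤ) + k + 1)

/-- `X` is the (self-adjoint) position operator: `X e_n = (n+1) e_n` (0-based). -/
def IsPosOp (e : ℕ → E) (X : E →ₗ.[ℂ] E) : Prop :=
  X.adjoint = X ∧ ∀ q : ℕ, ∃ hq : e q ∈ X.domain, X ⟨e q, hq⟩ = ((q : ℂ) + 1) • e q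

/-- `A` is the self-adjoint operator `A_g`, the closure of `½(T_g X + X T_g)`;
being essentially self-adjoint, it is the unique self-adjoint operator with
matrix elements `((p+q+2)/2)·ĝ(p−q)` on the canonical basis (0-based). -/
def IsAg (e : ℕ → E) (g : ℝ → ℂ) (A : E →ₗ.[ℂ] E) : Prop :=
  A.adjoint = A ∧ ∀ q : ℕ, ∃ hq : e q ∈ A.domain, ∀ p : ℕ,
    ⟪e p, A ⟨e q, hq⟩⟫_ℂ = (((p : ℂ) + q + 2) / 2) * fcoef g ((p : ℤ) - q)

/-- `C = ad_A B`: the commutator form of `A` and `B` on `D(A) × D(A)` is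
represented by the bounded operator `C`; in particular `B ∈ C¹(A)`. -/
def CommutatorOf (A : E →ₗ.[ℂ] E) (B C : E →L[ℂ] E) : Prop :=
  ∀ φ ψ : A.domain, ⟪A φ, B (ψ : E)⟫_ℂ - ⟪(φ : E), B (A ψ)⟫_ℂ = ⟪(φ : E), C (ψ : E)⟫_ℂ

/-- The unitary group `e^{iHt}` generated by a bounded operator `H`. -/
def expIt (Hop : E →L[ℂ] E) (t : ℝ) : E →L[ℂ] E :=
  NormedSpace.exp ((Complex.I * (t : ℂ)) • Hop)

/-!
`X` is unbounded, so `r ↦ e^{-iHr} X e^{iHr} φ` cannot be differentiated directly. Replace `X`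
by its bounded Yosida approximations `X_K = X ρ_K`, `ρ_K = (K+1)(X+K+1)⁻¹`, which are diagonal in
the canonical basis. Since `ρ_K` maps into `D(X)`, the commutator hypothesis gives
`[X_K, H] = ρ_K (ad_X H) ρ_K`, so `r ↦ e^{-iHr} X_K e^{iHr} φ` has derivative
`e^{-iHr} i ρ_K (ad_X H) ρ_K e^{iHr} φ`. As `K → ∞`, `ρ_K → 1` strongly with `‖ρ_K‖ ≤ 1`;
dominated convergence in the integrated form of this identity shows that
`w r = e^{-iHr} X e^{iHr} φ` has derivative `e^{-iHr} (i ad_X H) e^{iHr} φ`. Differentiating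
`‖w r‖² = ‖X e^{iHr} φ‖²` and using unitarity of `e^{iHr}` gives the formula.
-/

open Filter Topology

section Calculus

variable {F : Type*} [NormedAddCommGroup F]

theorem hasDerivAt_of_tendsto_of_dominated [NormedSpace ℝ F] [CompleteSpace F] {α : Type*}
    {l : Filter α} [l.IsCountablyGenerated] [l.NeBot] {f f' : α → ℝ → F} {g g' : ℝ → F} {C : ℝ}
    (hf : ∀ a s, HasDerivAt (f a) (f' a s) s) (hf' : ∀ a, Continuous (f' a))
    (hC : ∀ a s, ‖f' a s‖ ≤ C) (hfg : ∀ s, Tendsto (f · s) l (𝓝 (g s)))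
    (hfg' : ∀ s, Tendsto (f' · s) l (𝓝 (g' s))) (hg' : Continuous g') (s : ℝ) :
    HasDerivAt g (g' s) s := by
  have hg : g = fun r => g 0 + ∫ u in (0 : ℝ)..r, g' u := funext fun r => by
    have hint := intervalIntegral.tendsto_integral_filter_of_dominated_convergence (fun _ => C)
      (Eventually.of_forall fun a => (hf' a).aestronglyMeasurable)
      (Eventually.of_forall fun a => MeasureTheory.ae_of_all _ fun u _ => hC a u)
      (intervalIntegrable_const (μ := MeasureTheory.volume))
      (MeasureTheory.ae_of_all _ fun u _ => hfg' u) (a := 0) (b := r)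
    have hftc (a : α) : ∫ u in (0 : ℝ)..r, f' a u = f a r - f a 0 :=
      intervalIntegral.integral_eq_sub_of_hasDerivAt (fun u _ => hf a u)
        ((hf' a).intervalIntegrable 0 r)
    simp_rw [hftc] at hint
    rw [← tendsto_nhds_unique ((hfg r).sub (hfg 0)) hint]
    abel
  rw [hg]
  exact (hg'.integral_hasStrictDerivAt 0 s).hasDerivAt.const_add _

theorem norm_sq_sub_norm_sq_eq_integral [InnerProductSpace ℂ F] {w w' : ℝ → F}
    (hw : ∀ s, HasDerivAt w (w' s) s) (hw' : Continuous w') (a b : ℝ) :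
    ‖w b‖ ^ 2 - ‖w a‖ ^ 2 = 2 * ∫ s in a..b, (⟪w' s, w s⟫_ℂ).re := by
  let := InnerProductSpace.complexToReal (G := F)
  have hw_cont : Continuous w := continuous_iff_continuousAt.mpr fun s => (hw s).continuousAt
  rw [← intervalIntegral.integral_const_mul, ← intervalIntegral.integral_eq_sub_of_hasDerivAt
    (f := fun s => ‖w s‖ ^ 2) (fun s _ => (hw s).norm_sq) ?_]
  · congr 1; ext s
    rw [real_inner_eq_re_inner ℂ, inner_re_symm]
    rfl
  · exact (continuous_const.mul (hw_cont.inner hw')).intervalIntegrable a b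

end Calculus

section HeisenbergPicture

open NormedSpace

theorem hasDerivAt_exp_smul_neg_mul_mul_exp_smul {𝔸 : Type*} [NormedRing 𝔸] [NormedAlgebra ℝ 𝔸]
    [CompleteSpace 𝔸] (A T : 𝔸) (s : ℝ) :
    HasDerivAt (fun r : ℝ => exp (r • -A) * T * exp (r • A))
      (exp (s • -A) * (T * A - A * T) * exp (s • A)) s := by
  convert ((hasDerivAt_exp_smul_const (-A) s).mul_const T).fun_mul
    (hasDerivAt_exp_smul_const' A s) using 1
  noncomm_ring

variable {V : Type*} [NormedAddCommGroup V] [InnerProductSpace ℂ V] [CompleteSpace V]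
  (H : V →L[ℂ] V)

lemma expIt_eq_exp_smul (t : ℝ) : expIt H t = exp (t • (Complex.I • H)) := by
  rw [expIt, mul_comm, mul_smul, Complex.coe_smul]

lemma expIt_mem_unitary (hH : IsSelfAdjoint H) (t : ℝ) : expIt H t ∈ unitary (V →L[ℂ] V) := by
  -- `exp_mem_unitary_of_mem_skewAdjoint` is stated for `ℚ`-algebras
  let +nondep : NormedAlgebra ℚ (V →L[ℂ] V) := .restrictScalars ℚ ℂ _
  refine exp_mem_unitary_of_mem_skewAdjoint (hH.smul_mem_skewAdjoint ?_)
  rw [skewAdjoint.mem_iff]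
  simp [mul_comm]

lemma continuous_expIt : Continuous (expIt H) := by
  simp_rw [funext (expIt_eq_exp_smul H)]
  exact continuous_iff_continuousAt.mpr fun s =>
    (hasDerivAt_exp_smul_const (Complex.I • H) s).continuousAt

lemma expIt_zero : expIt H 0 = 1 := by
  simp [expIt]

lemma continuous_expIt_neg_apply_conj (T : V →L[ℂ] V) (φ : V) :
    Continuous fun r => expIt H (-r) (T (expIt H r φ)) :=
  ((continuous_expIt H).comp continuous_neg).clm_apply
    (T.continuous.comp ((continuous_expIt H).clm_apply continuous_const))

lemma hasDerivAt_expIt_neg_apply_conj (T : V →L[ℂ] V) (φ : V) (s : ℝ) :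
    HasDerivAt (fun r => expIt H (-r) (T (expIt H r φ)))
      (expIt H (-s) ((Complex.I • (T * H - H * T)) (expIt H s φ))) s := by
  have h := ((ContinuousLinearMap.apply ℂ V φ).restrictScalars ℝ).hasFDerivAt.comp_hasDerivAt s
    (hasDerivAt_exp_smul_neg_mul_mul_exp_smul (Complex.I • H) T s)
  have hneg (r : ℝ) : expIt H (-r) = exp (r • -(Complex.I • H)) := by
    rw [expIt_eq_exp_smul, neg_smul, smul_neg]
  simp only [Function.comp_def, ContinuousLinearMap.coe_restrictScalars',
    ContinuousLinearMap.apply_apply] at h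
  convert h using 1
  · ext r; simp [hneg, expIt_eq_exp_smul]
  · simp [hneg, expIt_eq_exp_smul, smul_sub]

end HeisenbergPicture

section DiagonalOperator

variable {ι : Type*}

lemma Memℓp.real_mul {f : ι → ℂ} {p : ENNReal} (hf : Memℓp f p) {d : ι → ℝ}
    (hd : ∀ i, |d i| ≤ 1) : Memℓp (fun i => (d i : ℂ) * f i) p :=
  hf.mono' fun i => by
    simpa [norm_mul] using mul_le_mul_of_nonneg_right (hd i) (norm_nonneg (f i))

def lp.realMulCLM (d : ι → ℝ) (hd : ∀ i, |d i| ≤ 1) :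
    lp (fun _ : ι => ℂ) 2 →L[ℂ] lp (fun _ : ι => ℂ) 2 :=
  LinearMap.mkContinuous
    { toFun := fun f => ⟨fun i => (d i : ℂ) * f i, (lp.memℓp f).real_mul hd⟩
      map_add' := fun f g => lp.ext <| funext fun i => mul_add _ _ _
      map_smul' := fun c f => lp.ext <| funext fun i => mul_left_comm _ _ _ }
    1 fun f => by
      rw [one_mul]
      refine lp.norm_mono two_ne_zero fun i => ?_
      simpa [norm_mul] using mul_le_mul_of_nonneg_right (hd i) (norm_nonneg (f i))

@[simp]
lemma lp.realMulCLM_apply (d : ι → ℝ) (hd : ∀ i, |d i| ≤ 1) (f : lp (fun _ : ι => ℂ) 2) (i : ι) :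
    lp.realMulCLM d hd f i = d i * f i := rfl

lemma lp.norm_realMulCLM_le (d : ι → ℝ) (hd : ∀ i, |d i| ≤ 1) : ‖lp.realMulCLM d hd‖ ≤ 1 :=
  LinearMap.mkContinuous_norm_le _ zero_le_one _

variable {V : Type*} [NormedAddCommGroup V] [InnerProductSpace ℂ V] (b : HilbertBasis ι ℂ V)

def HilbertBasis.diagonal (d : ι → ℝ) (hd : ∀ i, |d i| ≤ 1) : V →L[ℂ] V :=
  (b.repr.symm : lp (fun _ : ι => ℂ) 2 →L[ℂ] V) ∘L lp.realMulCLM d hd ∘L (b.repr : V →L[ℂ] _)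

@[simp]
lemma HilbertBasis.repr_diagonal (d : ι → ℝ) (hd : ∀ i, |d i| ≤ 1) (x : V) (i : ι) :
    b.repr (b.diagonal d hd x) i = d i * b.repr x i := by
  simp [HilbertBasis.diagonal]

lemma HilbertBasis.norm_diagonal_apply_le (d : ι → ℝ) (hd : ∀ i, |d i| ≤ 1) (x : V) :
    ‖b.diagonal d hd x‖ ≤ ‖x‖ := by
  simpa [HilbertBasis.diagonal] using (lp.realMulCLM d hd).le_of_opNorm_le
    (lp.norm_realMulCLM_le d hd) (b.repr x)

lemma HilbertBasis.inner_diagonal_left (d : ι → ℝ) (hd : ∀ i, |d i| ≤ 1) (x y : V) :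
    ⟪b.diagonal d hd x, y⟫_ℂ = ⟪x, b.diagonal d hd y⟫_ℂ := by
  rw [← b.repr.inner_map_map, ← b.repr.inner_map_map, lp.inner_eq_tsum, lp.inner_eq_tsum]
  congr 1; ext i
  simp; ring

lemma HilbertBasis.tendsto_diagonal_apply {α : Type*} {l : Filter α} (d : α → ι → ℝ)
    (hd : ∀ a i, |d a i| ≤ 1) (hlim : ∀ i, Tendsto (d · i) l (𝓝 1)) (v : V) :
    Tendsto (fun a => b.diagonal (d a) (hd a) v) l (𝓝 v) := by
  have hp : 0 < (2 : ENNReal).toReal := by norm_num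
  set r := b.repr v
  have hnorm : ∀ a, ‖b.diagonal (d a) (hd a) v - v‖ ^ (2 : ENNReal).toReal =
      ∑' i, ‖((d a i : ℂ) - 1) * r i‖ ^ (2 : ENNReal).toReal := fun a => by
    rw [← b.repr.norm_map, lp.norm_rpow_eq_tsum hp]
    congr 1; ext i
    simp [r, sub_mul]
  have hsq : Tendsto (fun a => ‖b.diagonal (d a) (hd a) v - v‖ ^ (2 : ENNReal).toReal) l
      (𝓝 0) := by
    simp_rw [hnorm]
    have := tendsto_tsum_of_dominated_convergence (𝓕 := l) (g := fun _ => (0 : ℝ))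
      (f := fun a i => ‖((d a i : ℂ) - 1) * r i‖ ^ (2 : ENNReal).toReal)
      ((lp.memℓp ((2 : ℂ) • r)).summable hp) (fun i => ?_) (Eventually.of_forall fun a i => ?_)
    · simpa using this
    · have : Tendsto (fun a => ((d a i : ℂ) - 1) * r i) l (𝓝 0) := by
        simpa using ((Complex.continuous_ofReal.tendsto 1).comp (hlim i)).sub_const 1
          |>.mul_const (r i)
      simpa [hp.ne'] using (this.norm.rpow_const (Or.inr hp.le))
    · have h2 : ‖(d a i : ℂ) - 1‖ ≤ 2 := (norm_sub_le _ _).trans (by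
        simp only [Complex.norm_real, Real.norm_eq_abs, norm_one]; linarith [hd a i])
      rw [Real.norm_of_nonneg (by positivity), lp.coeFn_smul, Pi.smul_apply, norm_smul, norm_mul]
      gcongr
      simpa using h2
  have := hsq.rpow_const (p := ((2 : ENNReal).toReal)⁻¹) (Or.inr (by positivity))
  rw [Real.zero_rpow (by positivity)] at this
  refine tendsto_iff_norm_sub_tendsto_zero.mpr (this.congr fun a => ?_)
  exact Real.rpow_rpow_inv (norm_nonneg _) hp.ne'

lemma abs_natCast_add_one_div_le_one (m : ℝ) (hm : 0 ≤ m) (K : ℕ) :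
    |((K : ℝ) + 1) / (m + K + 1)| ≤ 1 := by
  rw [abs_of_nonneg (by positivity), div_le_one (by positivity)]
  linarith

variable (μ : ι → ℝ) (hμ : ∀ i, 0 ≤ μ i)

/-- `ρ_K = (K+1)(X+K+1)⁻¹` for the operator `X` diagonal in `b` with eigenvalues `μ`. -/
def HilbertBasis.resolventApprox (K : ℕ) : V →L[ℂ] V :=
  b.diagonal (fun i => ((K : ℝ) + 1) / (μ i + K + 1)) fun i => abs_natCast_add_one_div_le_one _ (hμ i) K

/-- The Yosida approximation `X ρ_K = (K+1)(1 - ρ_K)` of `X`. -/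
def HilbertBasis.yosidaApprox (K : ℕ) : V →L[ℂ] V :=
  ((K : ℂ) + 1) • (1 - b.resolventApprox μ hμ K)

lemma HilbertBasis.repr_resolventApprox (K : ℕ) (v : V) (i : ι) :
    b.repr (b.resolventApprox μ hμ K v) i = (((K : ℝ) + 1) / (μ i + K + 1) : ℝ) * b.repr v i :=
  b.repr_diagonal ..

lemma HilbertBasis.repr_yosidaApprox (K : ℕ) (v : V) (i : ι) :
    b.repr (b.yosidaApprox μ hμ K v) i =
      μ i * ((((K : ℝ) + 1) / (μ i + K + 1) : ℝ) * b.repr v i) := by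
  have : (μ i : ℂ) + K + 1 ≠ 0 := by exact_mod_cast (show μ i + K + 1 ≠ 0 by linarith [hμ i])
  simp only [HilbertBasis.yosidaApprox, smul_apply, sub_apply, one_apply_eq_self, map_smul,
    map_sub, lp.coeFn_smul, lp.coeFn_sub, Pi.smul_apply, Pi.sub_apply, smul_eq_mul,
    b.repr_resolventApprox]
  push_cast
  field_simp
  ring

lemma HilbertBasis.norm_resolventApprox_apply_le (K : ℕ) (v : V) :
    ‖b.resolventApprox μ hμ K v‖ ≤ ‖v‖ :=
  b.norm_diagonal_apply_le ..

lemma HilbertBasis.inner_resolventApprox_left (K : ℕ) (v w : V) :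
    ⟪b.resolventApprox μ hμ K v, w⟫_ℂ = ⟪v, b.resolventApprox μ hμ K w⟫_ℂ :=
  b.inner_diagonal_left ..

lemma HilbertBasis.tendsto_resolventApprox_apply (v : V) :
    Tendsto (fun K => b.resolventApprox μ hμ K v) atTop (𝓝 v) := by
  refine b.tendsto_diagonal_apply _ _ (fun i => ?_) v
  have : Tendsto (fun K : ℕ => μ i / ((K : ℝ) + 1) + 1) atTop (𝓝 1) := by
    simpa using ((tendsto_const_nhds (x := μ i)).div_atTop
      (tendsto_natCast_atTop_atTop.atTop_add (tendsto_const_nhds (x := (1 : ℝ))))).add_const 1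
  simpa using this.inv₀ one_ne_zero |>.congr fun K => by field_simp; ring

lemma HilbertBasis.tendsto_resolventApprox_apply_of_tendsto {v : ℕ → V} {x : V}
    (hv : Tendsto v atTop (𝓝 x)) :
    Tendsto (fun K => b.resolventApprox μ hμ K (v K)) atTop (𝓝 x) := by
  have hsmall : Tendsto (fun K => b.resolventApprox μ hμ K (v K - x)) atTop (𝓝 0) :=
    squeeze_zero_norm (fun K => b.norm_resolventApprox_apply_le μ hμ K _)
      (tendsto_iff_norm_sub_tendsto_zero.mp hv)
  simpa using hsmall.add (b.tendsto_resolventApprox_apply μ hμ x)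

end DiagonalOperator

section PositionOperator

variable {V : Type*} [NormedAddCommGroup V] [InnerProductSpace ℂ V] [CompleteSpace V]
  {X : V →ₗ.[ℂ] V}

lemma IsSelfAdjoint.isFormalAdjoint_self (hX : IsSelfAdjoint X) : X.IsFormalAdjoint X := by
  have h := LinearPMap.adjoint_isFormalAdjoint hX.dense_domain
  rwa [LinearPMap.isSelfAdjoint_def.mp hX] at h

variable {ι : Type*} (b : HilbertBasis ι ℂ V) {μ : ι → ℝ}

lemma HilbertBasis.repr_apply_of_eigenvector (hX : IsSelfAdjoint X)
    (hXb : ∀ i, ∃ hi : b i ∈ X.domain, X ⟨b i, hi⟩ = (μ i : ℂ) • b i) (ψ : X.domain) (i : ι) :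
    b.repr (X ψ) i = μ i * b.repr ψ i := by
  obtain ⟨hi, hXi⟩ := hXb i
  rw [b.repr_apply_apply, b.repr_apply_apply, ← hX.isFormalAdjoint_self ⟨b i, hi⟩ ψ, hXi,
    inner_smul_left, Complex.conj_ofReal]

lemma HilbertBasis.exists_mem_domain_of_repr_eq (hX : IsSelfAdjoint X)
    (hXb : ∀ i, ∃ hi : b i ∈ X.domain, X ⟨b i, hi⟩ = (μ i : ℂ) • b i) {ψ η : V}
    (hη : ∀ i, b.repr η i = μ i * b.repr ψ i) : ∃ hψ : ψ ∈ X.domain, X ⟨ψ, hψ⟩ = η := by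
  have key : ∀ x : X.domain, ⟪η, (x : V)⟫_ℂ = ⟪ψ, X x⟫_ℂ := fun x => by
    rw [← b.tsum_inner_mul_inner, ← b.tsum_inner_mul_inner]
    congr 1; ext i
    rw [← inner_conj_symm η, ← inner_conj_symm ψ]
    simp only [← b.repr_apply_apply, hη, b.repr_apply_of_eigenvector hX hXb, map_mul,
      Complex.conj_ofReal]
    ring
  have hmem : ψ ∈ X.adjoint.domain := LinearPMap.mem_adjoint_domain_of_exists ψ ⟨η, key⟩
  obtain ⟨hdom, hfun⟩ := LinearPMap.ext_iff.mp (LinearPMap.isSelfAdjoint_def.mp hX)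
  exact ⟨hdom ▸ hmem, hfun.symm.trans
    (LinearPMap.adjoint_apply_eq hX.dense_domain ⟨ψ, hmem⟩ key)⟩

lemma HilbertBasis.exists_resolventApprox_mem_domain (hμ : ∀ i, 0 ≤ μ i) (hX : IsSelfAdjoint X)
    (hXb : ∀ i, ∃ hi : b i ∈ X.domain, X ⟨b i, hi⟩ = (μ i : ℂ) • b i) (K : ℕ) (v : V) :
    ∃ h : b.resolventApprox μ hμ K v ∈ X.domain, X ⟨_, h⟩ = b.yosidaApprox μ hμ K v :=
  b.exists_mem_domain_of_repr_eq hX hXb fun i => by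
    rw [b.repr_yosidaApprox, b.repr_resolventApprox]

lemma HilbertBasis.yosidaApprox_apply_of_mem_domain (hμ : ∀ i, 0 ≤ μ i) (hX : IsSelfAdjoint X)
    (hXb : ∀ i, ∃ hi : b i ∈ X.domain, X ⟨b i, hi⟩ = (μ i : ℂ) • b i) (K : ℕ) (ψ : X.domain) :
    b.yosidaApprox μ hμ K ψ = b.resolventApprox μ hμ K (X ψ) :=
  b.repr.injective <| lp.ext <| funext fun i => by
    rw [b.repr_yosidaApprox, b.repr_resolventApprox, b.repr_apply_of_eigenvector hX hXb]
    ring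

lemma HilbertBasis.yosidaApprox_commutator (hμ : ∀ i, 0 ≤ μ i) (hX : IsSelfAdjoint X)
    (hXb : ∀ i, ∃ hi : b i ∈ X.domain, X ⟨b i, hi⟩ = (μ i : ℂ) • b i) {H D : V →L[ℂ] V}
    (hD : CommutatorOf X H D) (K : ℕ) :
    b.yosidaApprox μ hμ K * H - H * b.yosidaApprox μ hμ K =
      b.resolventApprox μ hμ K * D * b.resolventApprox μ hμ K := by
  ext1 w
  refine ext_inner_left ℂ fun v => ?_
  obtain ⟨hv, hXv⟩ := b.exists_resolventApprox_mem_domain hμ hX hXb K v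
  obtain ⟨hw, hXw⟩ := b.exists_resolventApprox_mem_domain hμ hX hXb K w
  have h := hD ⟨_, hv⟩ ⟨_, hw⟩
  simp only [hXv, hXw] at h
  simp only [HilbertBasis.yosidaApprox, mul_apply_eq_comp, sub_apply, smul_apply,
    one_apply_eq_self, map_sub, map_smul, inner_sub_left, inner_sub_right, inner_smul_left,
    inner_smul_right] at h ⊢
  rw [← b.inner_resolventApprox_left, ← b.inner_resolventApprox_left, ← h]
  simp only [map_add, map_natCast, map_one]
  ring

theorem HilbertBasis.hasDerivAt_expIt_neg_apply_position (hμ : ∀ i, 0 ≤ μ i)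
    (hX : IsSelfAdjoint X) (hXb : ∀ i, ∃ hi : b i ∈ X.domain, X ⟨b i, hi⟩ = (μ i : ℂ) • b i)
    {H D : V →L[ℂ] V} (hH : IsSelfAdjoint H) (hD : CommutatorOf X H D) (φ : V) {gX : ℝ → V}
    (hgX : ∀ s, ∃ h : expIt H s φ ∈ X.domain, gX s = X ⟨expIt H s φ, h⟩) (s : ℝ) :
    HasDerivAt (fun r => expIt H (-r) (gX r)) (expIt H (-s) ((Complex.I • D) (expIt H s φ))) s := by
  set ρ := b.resolventApprox μ hμ
  set Y := b.yosidaApprox μ hμ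
  have hcomm (K : ℕ) : Y K * H - H * Y K = ρ K * D * ρ K :=
    b.yosidaApprox_commutator hμ hX hXb hD K
  have hU (r : ℝ) (x : V) : ‖expIt H r x‖ = ‖x‖ :=
    (expIt H r).norm_map_of_mem_unitary (expIt_mem_unitary H hH r) x
  refine hasDerivAt_of_tendsto_of_dominated (l := atTop) (C := ‖D‖ * ‖φ‖)
    (f := fun K r => expIt H (-r) (Y K (expIt H r φ)))
    (fun K r => hasDerivAt_expIt_neg_apply_conj H (Y K) φ r)
    (fun K => continuous_expIt_neg_apply_conj H _ φ) (fun K r => ?_) (fun r => ?_) (fun r => ?_)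
    (continuous_expIt_neg_apply_conj H _ φ) s
  · rw [hU, hcomm, smul_apply, norm_smul, Complex.norm_I, one_mul, ← hU r φ]
    exact (b.norm_resolventApprox_apply_le μ hμ K _).trans <| D.le_opNorm_of_le <|
      b.norm_resolventApprox_apply_le μ hμ K _
  · obtain ⟨hr, hgr⟩ := hgX r
    have hY (K : ℕ) : Y K (expIt H r φ) = ρ K (gX r) := by
      rw [hgr]; exact b.yosidaApprox_apply_of_mem_domain hμ hX hXb K ⟨_, hr⟩
    simp only [hY]
    exact ((expIt H (-r)).continuous.tendsto _).comp (b.tendsto_resolventApprox_apply μ hμ _)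
  · simp only [hcomm, smul_apply, mul_apply_eq_comp]
    refine ((expIt H (-r)).continuous.tendsto _).comp (.const_smul ?_ _)
    exact b.tendsto_resolventApprox_apply_of_tendsto μ hμ <|
      (D.continuous.tendsto _).comp (b.tendsto_resolventApprox_apply μ hμ _)

end PositionOperator

lemma IsONBasis.exists_hilbertBasis {V : Type*} [NormedAddCommGroup V] [InnerProductSpace ℂ V]
    [CompleteSpace V] {e : ℕ → V} (he : IsONBasis e) : ∃ b : HilbertBasis ℕ ℂ V, ⇑b = e :=
  ⟨HilbertBasis.mk he.1 he.2.ge, HilbertBasis.coe_mk _ _⟩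

/-- For a bounded self-adjoint `H ∈ C¹(X)` on `ℓ²(ℕ)`:
`‖e^{iHt}φ‖_X² − ‖φ‖_X² = 2∫₀ᵗ Re⟨i(ad_X H)e^{iHs}φ, X e^{iHs}φ⟩ ds`, where
`‖ψ‖_X² = ‖ψ‖² + ‖Xψ‖²` and `gX s = X e^{iHs} φ`. -/
theorem stmt_19 (e : ℕ → E) (he : IsONBasis e)
    (X : E →ₗ.[ℂ] E) (hX : IsPosOp e X)
    (Hop : E →L[ℂ] E) (hsa : IsSelfAdjoint Hop)
    (D : E →L[ℂ] E) (hD : CommutatorOf X Hop D) :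
    ∀ φ : X.domain, ∀ gX : ℝ → E,
      (∀ s : ℝ, ∃ h : (expIt Hop s) (φ : E) ∈ X.domain,
        gX s = X ⟨(expIt Hop s) (φ : E), h⟩) →
      ∀ t : ℝ,
        (‖(expIt Hop t) (φ : E)‖ ^ 2 + ‖gX t‖ ^ 2) - (‖(φ : E)‖ ^ 2 + ‖X φ‖ ^ 2) =
          2 * ∫ s in (0:ℝ)..t, (⟪(Complex.I • D) ((expIt Hop s) (φ : E)), gX s⟫_ℂ).re := by
  intro φ gX hgX t
  obtain ⟨b, rfl⟩ := he.exists_hilbertBasis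
  have hXb (q : ℕ) : ∃ hq : b q ∈ X.domain, X ⟨b q, hq⟩ = (((q : ℝ) + 1 : ℝ) : ℂ) • b q := by
    simpa using hX.2 q
  have hU := expIt_mem_unitary Hop hsa
  have hgX0 : gX 0 = X φ := by
    obtain ⟨_, hg0⟩ := hgX 0
    simp_rw [hg0, expIt_zero]
    rfl
  have key := norm_sq_sub_norm_sq_eq_integral
    (b.hasDerivAt_expIt_neg_apply_position (fun q => by positivity) hX.1 hXb hsa hD φ hgX)
    (continuous_expIt_neg_apply_conj Hop _ _) 0 t
  simp only [ContinuousLinearMap.norm_map_of_mem_unitary (hU _),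
    ContinuousLinearMap.inner_map_map_of_mem_unitary (hU _), hgX0] at key
  rw [← key, ContinuousLinearMap.norm_map_of_mem_unitary (hU t)]
  ring
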